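/- arXiv:2007.14566 — 3 statements merged into one kernel-verified Lean document; each statement's English description precedes it below -/
import Mathlib

section
/- Continuity of the Helstrom limit (Lemma 1): Let m ≥ 1 and let (ρ_n)_{n=0}^{m−1} and (ρ'_n)_{n=0}^{m−1} be density matrices on ℂ^N such that ‖ρ_n − ρ'_n‖₁ ≤ δ_n for every n, and let (p_n)_{n=0}^{m−1} be prior probabilities. Then P_H({ρ'_n, p_n}) ≥ P_H({ρ_n, p_n}) − (1/2)·Σ_{n=0}^{m−1} p_n·δ_n. -/
open Matrix BigOperators Finset ComplexOrder

noncomputable section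

/-- A density matrix: positive semidefinite with unit trace. -/
def IsDensityMatrix {ι : Type*} [Fintype ι] (ρ : Matrix ι ι ℂ) : Prop :=
  ρ.PosSemidef ∧ ρ.trace = 1

/-- The Helstrom minimum error probability for discriminating the states `ρ n`
with prior probabilities `p n`, optimized over all POVMs. -/
def helstrom {ι : Type*} [Fintype ι] [DecidableEq ι] {m : ℕ}
    (ρ : Fin m → Matrix ι ι ℂ) (p : Fin m → ℝ) : ℝ :=
  1 - sSup { x : ℝ | ∃ M : Fin m → Matrix ι ι ℂ,
      (∀ n, (M n).PosSemidef) ∧ (∑ n, M n) = 1 ∧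
      x = ∑ n, p n * ((M n * ρ n).trace).re }

open Classical in
/-- The positive semidefinite square root (junk value `0` off the PSD cone). -/
def psdSqrt {ι : Type*} [Fintype ι] [DecidableEq ι] (A : Matrix ι ι ℂ) : Matrix ι ι ℂ :=
  if h : A.PosSemidef then
    (h.1.eigenvectorUnitary : Matrix ι ι ℂ) * diagonal ((↑) ∘ (√·) ∘ h.1.eigenvalues) *
      (star h.1.eigenvectorUnitary : Matrix ι ι ℂ) else 0

/-- The trace norm `‖A‖₁ = tr √(Aᴴ A)`. -/
def traceNorm {ι : Type*} [Fintype ι] [DecidableEq ι] (A : Matrix ι ι ℂ) : ℝ :=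
  ((psdSqrt (Aᴴ * A)).trace).re

/-! Let `Δ = ρ' - ρ` (Hermitian, traceless) and let `0 ≤ M ≤ 1` be a POVM element. In an
eigenbasis of `Δ`, `Re tr(M Δ) = ∑ dᵢ λᵢ` with diagonal entries `dᵢ ∈ [0, 1]` of the rotated `M`,
so `Re tr(M Δ) ≤ ∑ max λᵢ 0 = ½ ∑ |λᵢ| = ½ ‖Δ‖₁`, the middle equality because `∑ λᵢ = tr Δ = 0`.
Hence every POVM succeeds on `ρ'` with probability at most its success probability on `ρ` plus
`½ ∑ pₙ δₙ`, and taking suprema gives the claim. -/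

namespace Matrix

variable {ι : Type*} [Fintype ι] [DecidableEq ι]

lemma psdSqrt_eq_cfc {A : Matrix ι ι ℂ} (hA : A.PosSemidef) : psdSqrt A = cfc Real.sqrt A := by
  rw [psdSqrt, dif_pos hA, hA.1.cfc_eq, IsHermitian.cfc, Unitary.conjStarAlgAut_apply]
  rfl

lemma IsHermitian.trace_cfc {A : Matrix ι ι ℂ} (hA : A.IsHermitian) (f : ℝ → ℝ) :
    (cfc f A).trace = ∑ i, (f (hA.eigenvalues i) : ℂ) := by
  rw [hA.cfc_eq, IsHermitian.cfc, Unitary.conjStarAlgAut_apply, trace_mul_cycle,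
    Unitary.coe_star_mul_self, one_mul, trace_diagonal]
  rfl

lemma IsHermitian.traceNorm_eq_sum_abs_eigenvalues {A : Matrix ι ι ℂ} (hA : A.IsHermitian) :
    traceNorm A = ∑ i, |hA.eigenvalues i| := by
  have hsqrt : psdSqrt (Aᴴ * A) = cfc (fun x : ℝ ↦ |x|) A := by
    rw [psdSqrt_eq_cfc (posSemidef_conjTranspose_mul_self A), hA.eq, ← sq,
      ← cfc_comp_pow Real.sqrt 2 A]
    simp only [Real.sqrt_sq_eq_abs]
  rw [traceNorm, hsqrt, hA.trace_cfc, Complex.re_sum]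
  rfl

lemma traceNorm_neg (A : Matrix ι ι ℂ) : traceNorm (-A) = traceNorm A := by
  rw [traceNorm, traceNorm, conjTranspose_neg, neg_mul_neg]

lemma traceNorm_sub_comm (A B : Matrix ι ι ℂ) : traceNorm (A - B) = traceNorm (B - A) := by
  rw [← neg_sub, traceNorm_neg]

lemma re_trace_mul_le_sum_max_eigenvalues {A M : Matrix ι ι ℂ} (hA : A.IsHermitian)
    (hM : M.PosSemidef) (hM1 : (1 - M).PosSemidef) :
    ((M * A).trace).re ≤ ∑ i, max (hA.eigenvalues i) 0 := by
  set U : Matrix ι ι ℂ := (hA.eigenvectorUnitary : Matrix ι ι ℂ)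
  have hUU : star U * U = 1 := Unitary.coe_star_mul_self _
  have htrace : ((M * A).trace).re = ∑ i, ((star U * M * U) i i).re * hA.eigenvalues i := by
    conv_lhs => rw [hA.spectral_theorem, Unitary.conjStarAlgAut_apply]
    rw [← mul_assoc, ← mul_assoc, trace_mul_cycle, ← mul_assoc]
    simp [trace, mul_diagonal, U]
  have hC : (star U * M * U).PosSemidef := by
    simpa [← star_eq_conjTranspose] using hM.conjTranspose_mul_mul_same U
  have hC1 : (1 - star U * M * U).PosSemidef := by
    simpa [← star_eq_conjTranspose, mul_sub, sub_mul, hUU]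
      using hM1.conjTranspose_mul_mul_same U
  rw [htrace]
  refine sum_le_sum fun i _ ↦ ?_
  have h0 : 0 ≤ ((star U * M * U) i i).re := (Complex.nonneg_iff.mp hC.diag_nonneg).1
  have h1 : ((star U * M * U) i i).re ≤ 1 := by
    simpa using (Complex.nonneg_iff.mp (hC1.diag_nonneg (i := i))).1
  rcases le_total 0 (hA.eigenvalues i) with hl | hl
  · exact (mul_le_of_le_one_left hl h1).trans (le_max_left _ _)
  · exact (mul_nonpos_of_nonneg_of_nonpos h0 hl).trans (le_max_right _ _)

lemma re_trace_mul_le_half_traceNorm {A M : Matrix ι ι ℂ} (hA : A.IsHermitian)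
    (htr : A.trace = 0) (hM : M.PosSemidef) (hM1 : (1 - M).PosSemidef) :
    ((M * A).trace).re ≤ traceNorm A / 2 := by
  have hsum : ∑ i, hA.eigenvalues i = 0 := by
    simpa [htr] using (congrArg Complex.re hA.trace_eq_sum_eigenvalues).symm
  have hmax (x : ℝ) : max x 0 = (|x| + x) / 2 := by
    rcases le_total 0 x with hx | hx
    · rw [max_eq_left hx, abs_of_nonneg hx]; ring
    · rw [max_eq_right hx, abs_of_nonpos hx]; ring
  calc ((M * A).trace).re ≤ ∑ i, max (hA.eigenvalues i) 0 :=
        re_trace_mul_le_sum_max_eigenvalues hA hM hM1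
    _ = traceNorm A / 2 := by
        simp only [hmax, ← sum_div, sum_add_distrib, hsum, add_zero,
          hA.traceNorm_eq_sum_abs_eigenvalues]

lemma re_trace_mul_le_one {ρ M : Matrix ι ι ℂ} (hρ : IsDensityMatrix ρ)
    (hM : M.PosSemidef) (hM1 : (1 - M).PosSemidef) : ((M * ρ).trace).re ≤ 1 := by
  have hsum : ∑ i, hρ.1.1.eigenvalues i = 1 := by
    simpa [hρ.2] using (congrArg Complex.re hρ.1.1.trace_eq_sum_eigenvalues).symm
  calc ((M * ρ).trace).re ≤ ∑ i, max (hρ.1.1.eigenvalues i) 0 :=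
        re_trace_mul_le_sum_max_eigenvalues hρ.1.1 hM hM1
    _ = 1 := by simp only [max_eq_left (hρ.1.eigenvalues_nonneg _), hsum]

lemma re_trace_mul_le_add_half_traceNorm {ρ ρ' M : Matrix ι ι ℂ} (hρ : ρ.IsHermitian)
    (hρ' : ρ'.IsHermitian) (htr : ρ.trace = ρ'.trace) (hM : M.PosSemidef)
    (hM1 : (1 - M).PosSemidef) :
    ((M * ρ').trace).re ≤ ((M * ρ).trace).re + traceNorm (ρ - ρ') / 2 := by
  have h := re_trace_mul_le_half_traceNorm (hρ'.sub hρ) (by rw [trace_sub, htr, sub_self]) hM hM1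
  rw [mul_sub, trace_sub, Complex.sub_re, traceNorm_sub_comm] at h
  linarith

end Matrix

section POVM

variable {κ ι : Type*} [Fintype κ] [DecidableEq ι]

def IsPOVM (M : κ → Matrix ι ι ℂ) : Prop :=
  (∀ n, (M n).PosSemidef) ∧ ∑ n, M n = 1

lemma IsPOVM.posSemidef {M : κ → Matrix ι ι ℂ} (hM : IsPOVM M) (n : κ) : (M n).PosSemidef :=
  hM.1 n

lemma IsPOVM.one_sub_posSemidef {M : κ → Matrix ι ι ℂ} (hM : IsPOVM M) (n : κ) :
    (1 - M n).PosSemidef := by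
  classical
  rw [← hM.2, ← sum_erase_eq_sub (mem_univ n)]
  exact posSemidef_sum _ fun k _ ↦ hM.1 k

lemma isPOVM_single [DecidableEq κ] (i : κ) : IsPOVM (Pi.single i 1 : κ → Matrix ι ι ℂ) := by
  refine ⟨fun n ↦ ?_, by simp⟩
  rcases eq_or_ne n i with rfl | hn
  · simpa using PosSemidef.one
  · simpa [hn] using PosSemidef.zero

variable [Fintype ι]

def successProb (ρ : κ → Matrix ι ι ℂ) (p : κ → ℝ) (M : κ → Matrix ι ι ℂ) : ℝ :=
  ∑ n, p n * ((M n * ρ n).trace).re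

lemma successProb_le_one {ρ M : κ → Matrix ι ι ℂ} {p : κ → ℝ} (hM : IsPOVM M)
    (hρ : ∀ n, IsDensityMatrix (ρ n)) (hp : ∀ n, 0 ≤ p n) (hpsum : ∑ n, p n = 1) :
    successProb ρ p M ≤ 1 :=
  hpsum ▸ sum_le_sum fun n _ ↦ mul_le_of_le_one_right (hp n)
    (re_trace_mul_le_one (hρ n) (hM.posSemidef n) (hM.one_sub_posSemidef n))

lemma successProb_le_add {ρ ρ' M : κ → Matrix ι ι ℂ} {p δ : κ → ℝ} (hM : IsPOVM M)
    (hρ : ∀ n, (ρ n).IsHermitian) (hρ' : ∀ n, (ρ' n).IsHermitian)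
    (htr : ∀ n, (ρ n).trace = (ρ' n).trace) (hδ : ∀ n, traceNorm (ρ n - ρ' n) ≤ δ n)
    (hp : ∀ n, 0 ≤ p n) :
    successProb ρ' p M ≤ successProb ρ p M + (1/2) * ∑ n, p n * δ n := by
  rw [successProb, successProb, mul_sum, ← sum_add_distrib]
  refine sum_le_sum fun n _ ↦ ?_
  have h := re_trace_mul_le_add_half_traceNorm (hρ n) (hρ' n) (htr n) (hM.posSemidef n)
    (hM.one_sub_posSemidef n)
  have h' : ((M n * ρ' n).trace).re ≤ ((M n * ρ n).trace).re + δ n / 2 := by linarith [hδ n]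
  linarith [mul_le_mul_of_nonneg_left h' (hp n)]

end POVM

lemma helstrom_eq_one_sub_sSup {ι : Type*} [Fintype ι] [DecidableEq ι] {m : ℕ}
    (ρ : Fin m → Matrix ι ι ℂ) (p : Fin m → ℝ) :
    helstrom ρ p = 1 - sSup (successProb ρ p '' {M | IsPOVM M}) := by
  simp only [helstrom, Set.image, Set.mem_ofPred_eq, IsPOVM, successProb, and_assoc, eq_comm]

/-- Continuity of the Helstrom limit (Lemma 1). -/
theorem helstrom_continuity {N m : ℕ} (hm : 1 ≤ m)
    (ρ ρ' : Fin m → Matrix (Fin N) (Fin N) ℂ) (δ : Fin m → ℝ) (p : Fin m → ℝ)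
    (hρ : ∀ n, IsDensityMatrix (ρ n)) (hρ' : ∀ n, IsDensityMatrix (ρ' n))
    (hδ : ∀ n, traceNorm (ρ n - ρ' n) ≤ δ n)
    (hp : ∀ n, 0 ≤ p n) (hpsum : ∑ n, p n = 1) :
    helstrom ρ' p ≥ helstrom ρ p - (1/2) * ∑ n, p n * δ n := by
  have hbdd : BddAbove (successProb ρ p '' {M | IsPOVM M}) := by
    refine ⟨1, ?_⟩
    rintro _ ⟨M, hM, rfl⟩
    exact successProb_le_one hM hρ hp hpsum
  rw [ge_iff_le, helstrom_eq_one_sub_sSup, helstrom_eq_one_sub_sSup, sub_sub, sub_le_sub_iff_left]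
  refine csSup_le (Set.Nonempty.image _ ⟨_, isPOVM_single ⟨0, hm⟩⟩) ?_
  rintro _ ⟨M, hM, rfl⟩
  calc successProb ρ' p M ≤ successProb ρ p M + (1/2) * ∑ n, p n * δ n :=
        successProb_le_add hM (fun n ↦ (hρ n).1.1) (fun n ↦ (hρ' n).1.1)
          (fun n ↦ (hρ n).2.trans (hρ' n).2.symm) hδ hp
    _ ≤ sSup (successProb ρ p '' {M | IsPOVM M}) + (1/2) * ∑ n, p n * δ n := by
        gcongr
        exact le_csSup hbdd ⟨M, hM, rfl⟩
end
end

section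
/- Reduction of the optimal POVM under geometric uniform symmetry: Let S be an N×N complex unitary matrix with S^m = I, let ρ_0 be a density matrix on ℂ^N, and set ρ_n = S^n·ρ_0·(Sᴴ)^n for n = 0,…,m−1. Then the Helstrom error probability of the equiprobable states (ρ_n)_{n=0}^{m−1} equals 1 − sup { Re(tr(Π_0·ρ_0)) : Π_0 an N×N positive semidefinite complex matrix with Σ_{n=0}^{m−1} S^n·Π_0·(Sᴴ)^n = I }. -/
open Matrix BigOperators Finset ComplexOrder

noncomputable section

/-! A POVM `(M n)` and the seed `M₀ = m⁻¹ • ∑ n, Sᴴ ^ n * M n * S ^ n` have the same success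
probability on the orbit `ρₙ = Sⁿ ρ₀ Sᴴⁿ`, by cyclicity of the trace; the seed satisfies
`∑ₖ Sᵏ M₀ Sᴴᵏ = 1` because this twirl is invariant under conjugation by `S` (as `S ^ m = 1`).
Conversely a seed generates the covariant POVM `Sⁿ M₀ Sᴴⁿ`, which has the same success
probability since `S` is unitary. So both suprema run over the same set of values. -/

theorem Finset.sum_range_add_one_eq_of_apply_eq {M : Type*} [AddCancelCommMonoid M]
    {f : ℕ → M} {m : ℕ} (h : f m = f 0) :
    ∑ k ∈ range m, f (k + 1) = ∑ k ∈ range m, f k := by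
  have hsplit := sum_range_succ' f m
  rwa [sum_range_succ, h, add_left_inj, eq_comm] at hsplit

namespace Matrix

variable {ι : Type*} [Fintype ι]

theorem trace_conjTranspose_conj_mul (U A B : Matrix ι ι ℂ) :
    (Uᴴ * A * U * B).trace = (A * (U * B * Uᴴ)).trace := by
  rw [show Uᴴ * A * U * B = Uᴴ * (A * U * B) by simp only [Matrix.mul_assoc], trace_mul_comm]
  simp only [Matrix.mul_assoc]

variable [DecidableEq ι]

theorem conjTranspose_pow_mul_pow {S : Matrix ι ι ℂ} (hS : Sᴴ * S = 1) (n : ℕ) :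
    Sᴴ ^ n * S ^ n = 1 := by
  have hcomm : Commute Sᴴ S := hS.trans (mul_eq_one_comm.mp hS).symm
  rw [← hcomm.mul_pow, hS, one_pow]

theorem pow_mul_conjTranspose_pow {S : Matrix ι ι ℂ} (hS : Sᴴ * S = 1) (n : ℕ) :
    S ^ n * Sᴴ ^ n = 1 :=
  mul_eq_one_comm.mp (conjTranspose_pow_mul_pow hS n)

theorem PosSemidef.pow_mul_mul_conjTranspose_pow {A : Matrix ι ι ℂ} (hA : A.PosSemidef)
    (S : Matrix ι ι ℂ) (n : ℕ) : (S ^ n * A * Sᴴ ^ n).PosSemidef := by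
  simpa only [conjTranspose_pow] using hA.mul_mul_conjTranspose_same (S ^ n)

theorem PosSemidef.conjTranspose_pow_mul_mul_pow {A : Matrix ι ι ℂ} (hA : A.PosSemidef)
    (S : Matrix ι ι ℂ) (n : ℕ) : (Sᴴ ^ n * A * S ^ n).PosSemidef := by
  simpa only [conjTranspose_pow] using hA.conjTranspose_mul_mul_same (S ^ n)

theorem trace_conj_mul_conj {U : Matrix ι ι ℂ} (hU : Uᴴ * U = 1) (A B : Matrix ι ι ℂ) :
    (U * A * Uᴴ * (U * B * Uᴴ)).trace = (A * B).trace := by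
  have hconj : U * A * Uᴴ * (U * B * Uᴴ) = U * (A * B) * Uᴴ := by
    simp only [Matrix.mul_assoc, ← Matrix.mul_assoc Uᴴ U, hU, Matrix.one_mul]
  rw [hconj, trace_mul_cycle, ← Matrix.mul_assoc, hU, Matrix.one_mul]

def twirl (S : Matrix ι ι ℂ) (m : ℕ) : Matrix ι ι ℂ →ₗ[ℂ] Matrix ι ι ℂ where
  toFun A := ∑ k : Fin m, S ^ (k : ℕ) * A * Sᴴ ^ (k : ℕ)
  map_add' A B := by simp only [Matrix.mul_add, Matrix.add_mul, sum_add_distrib]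
  map_smul' c A := by simp only [Matrix.mul_smul, Matrix.smul_mul, smul_sum, RingHom.id_apply]

theorem twirl_apply (S : Matrix ι ι ℂ) (m : ℕ) (A : Matrix ι ι ℂ) :
    twirl S m A = ∑ k : Fin m, S ^ (k : ℕ) * A * Sᴴ ^ (k : ℕ) :=
  rfl

variable {S : Matrix ι ι ℂ} {m : ℕ}

theorem twirl_one (hS : Sᴴ * S = 1) : twirl S m 1 = m • 1 := by
  simp [twirl_apply, pow_mul_conjTranspose_pow hS]

theorem twirl_conj (hSm : S ^ m = 1) (A : Matrix ι ι ℂ) :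
    twirl S m (S * A * Sᴴ) = twirl S m A := by
  set f : ℕ → Matrix ι ι ℂ := fun k => S ^ k * A * Sᴴ ^ k
  have hshift (k : ℕ) : S ^ k * (S * A * Sᴴ) * Sᴴ ^ k = f (k + 1) := by
    simp only [f, pow_succ S, pow_succ' Sᴴ, Matrix.mul_assoc]
  have hperiod : f m = f 0 := by simp [f, hSm, ← conjTranspose_pow]
  change ∑ k : Fin m, S ^ (k : ℕ) * (S * A * Sᴴ) * Sᴴ ^ (k : ℕ) = ∑ k : Fin m, f k
  simp only [hshift]
  rw [Fin.sum_univ_eq_sum_range (fun k => f (k + 1)), Fin.sum_univ_eq_sum_range f,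
    sum_range_add_one_eq_of_apply_eq hperiod]

theorem twirl_pow_conj (hSm : S ^ m = 1) (n : ℕ) (A : Matrix ι ι ℂ) :
    twirl S m (S ^ n * A * Sᴴ ^ n) = twirl S m A := by
  induction n with
  | zero => simp
  | succ n ih =>
    rw [pow_succ' S n, pow_succ Sᴴ n, ← ih, ← twirl_conj hSm (S ^ n * A * Sᴴ ^ n)]
    simp only [Matrix.mul_assoc]

theorem twirl_conjTranspose_pow_conj (hS : Sᴴ * S = 1) (hSm : S ^ m = 1) (n : ℕ)
    (A : Matrix ι ι ℂ) : twirl S m (Sᴴ ^ n * A * S ^ n) = twirl S m A := by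
  rw [← twirl_pow_conj hSm n (Sᴴ ^ n * A * S ^ n)]
  simp only [← Matrix.mul_assoc, pow_mul_conjTranspose_pow hS, Matrix.one_mul]
  simp only [Matrix.mul_assoc, pow_mul_conjTranspose_pow hS, Matrix.mul_one]

end Matrix

section Covariant

variable {ι : Type*} [Fintype ι] [DecidableEq ι] {S : Matrix ι ι ℂ} {m : ℕ}

theorem sum_trace_pow_conj_mul_pow_conj (hS : Sᴴ * S = 1) (A B : Matrix ι ι ℂ) :
    ∑ n : Fin m, (S ^ (n : ℕ) * A * Sᴴ ^ (n : ℕ) * (S ^ (n : ℕ) * B * Sᴴ ^ (n : ℕ))).trace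
      = m * (A * B).trace := by
  have hunitary (n : ℕ) : (S ^ n)ᴴ * S ^ n = 1 := by
    rw [conjTranspose_pow]; exact conjTranspose_pow_mul_pow hS n
  simp only [← conjTranspose_pow, trace_conj_mul_conj (hunitary _), sum_const, card_univ,
    Fintype.card_fin, nsmul_eq_mul]

theorem exists_povm_of_twirl_eq_one (hS : Sᴴ * S = 1) (hm : m ≠ 0) {M₀ : Matrix ι ι ℂ}
    (hM₀ : M₀.PosSemidef) (htwirl : twirl S m M₀ = 1) (ρ₀ : Matrix ι ι ℂ) :
    ∃ M : Fin m → Matrix ι ι ℂ, (∀ n, (M n).PosSemidef) ∧ ∑ n, M n = 1 ∧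
      ((M₀ * ρ₀).trace).re
        = ∑ n : Fin m, 1 / (m : ℝ) * ((M n * (S ^ (n : ℕ) * ρ₀ * Sᴴ ^ (n : ℕ))).trace).re := by
  refine ⟨fun n => S ^ (n : ℕ) * M₀ * Sᴴ ^ (n : ℕ),
    fun n => hM₀.pow_mul_mul_conjTranspose_pow S n, htwirl, ?_⟩
  rw [← mul_sum, ← Complex.re_sum, sum_trace_pow_conj_mul_pow_conj hS, ← Complex.ofReal_natCast,
    Complex.re_ofReal_mul]
  field_simp

theorem exists_twirl_eq_one_of_povm (hS : Sᴴ * S = 1) (hSm : S ^ m = 1) (hm : m ≠ 0)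
    {M : Fin m → Matrix ι ι ℂ} (hM : ∀ n, (M n).PosSemidef) (hsum : ∑ n, M n = 1)
    (ρ₀ : Matrix ι ι ℂ) :
    ∃ M₀ : Matrix ι ι ℂ, M₀.PosSemidef ∧ twirl S m M₀ = 1 ∧
      ∑ n : Fin m, 1 / (m : ℝ) * ((M n * (S ^ (n : ℕ) * ρ₀ * Sᴴ ^ (n : ℕ))).trace).re
        = ((M₀ * ρ₀).trace).re := by
  refine ⟨(m : ℝ)⁻¹ • ∑ n : Fin m, Sᴴ ^ (n : ℕ) * M n * S ^ (n : ℕ), ?_, ?_, ?_⟩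
  · exact (posSemidef_sum _ fun n _ => (hM n).conjTranspose_pow_mul_mul_pow S n).smul
      (by positivity)
  · rw [LinearMap.map_smul_of_tower, map_sum]
    simp only [twirl_conjTranspose_pow_conj hS hSm]
    rw [← map_sum, hsum, twirl_one hS, ← Nat.cast_smul_eq_nsmul ℝ,
      inv_smul_smul₀ (Nat.cast_ne_zero.mpr hm)]
  · simp only [Matrix.smul_mul, trace_smul, sum_mul, trace_sum, ← conjTranspose_pow,
      trace_conjTranspose_conj_mul, Complex.real_smul, Complex.re_ofReal_mul, Complex.re_sum,
      mul_sum, one_div]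

end Covariant

theorem helstrom_GUS_general {N m : ℕ} (hm : 1 ≤ m)
    (S : Matrix (Fin N) (Fin N) ℂ) (hS : Sᴴ * S = 1) (hSm : S ^ m = 1)
    (ρ0 : Matrix (Fin N) (Fin N) ℂ) :
    helstrom (fun n : Fin m => S^(n:ℕ) * ρ0 * (Sᴴ)^(n:ℕ)) (fun _ => 1/(m:ℝ))
      = 1 - sSup { x : ℝ | ∃ M0 : Matrix (Fin N) (Fin N) ℂ, M0.PosSemidef ∧
            (∑ n : Fin m, S^(n:ℕ) * M0 * (Sᴴ)^(n:ℕ)) = 1 ∧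
            x = ((M0 * ρ0).trace).re } := by
  have hm₀ : m ≠ 0 := Nat.one_le_iff_ne_zero.mp hm
  unfold helstrom
  congr 2
  ext x
  constructor
  · rintro ⟨M, hM, hsum, rfl⟩
    exact exists_twirl_eq_one_of_povm hS hSm hm₀ hM hsum ρ0
  · rintro ⟨M₀, hM₀, htwirl, rfl⟩
    exact exists_povm_of_twirl_eq_one hS hm₀ hM₀ htwirl ρ0

/-- Reduction of the optimal POVM under geometric uniform symmetry. -/
theorem helstrom_GUS {N m : ℕ} (hm : 1 ≤ m)
    (S : Matrix (Fin N) (Fin N) ℂ) (hS : Sᴴ * S = 1) (hSm : S ^ m = 1)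
    (ρ0 : Matrix (Fin N) (Fin N) ℂ) (hρ0 : IsDensityMatrix ρ0) :
    helstrom (fun n : Fin m => S^(n:ℕ) * ρ0 * (Sᴴ)^(n:ℕ)) (fun _ => 1/(m:ℝ))
      = 1 - sSup { x : ℝ | ∃ M0 : Matrix (Fin N) (Fin N) ℂ, M0.PosSemidef ∧
            (∑ n : Fin m, S^(n:ℕ) * M0 * (Sᴴ)^(n:ℕ)) = 1 ∧
            x = ((M0 * ρ0).trace).re } :=
  helstrom_GUS_general hm S hS hSm ρ0
end
end

section
/- Closed form of the channel-position-finding error function for one use (u = 1): For every integer m ≥ 2 and all q_B ∈ (0,1), q_T ∈ [0,1], h_m^1(q_B, q_T) = 1 − (1/m)·[ q_T·q_B^{m−1} + (1−q_T)·(1−q_B)^{m−1} + (1 − (1−q_B)^m − q_B^m)·max( q_T/q_B , (1−q_T)/(1−q_B) ) ]. -/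
open Matrix BigOperators Finset ComplexOrder

noncomputable section

/-- Hamming weight of a Boolean string. -/
def hamming {u : ℕ} (x : Fin u → Bool) : ℕ :=
  (Finset.univ.filter fun k => x k = true).card

open Classical in
/-- The channel-position-finding error function `h_m^u(qB,qT)`. -/
def hErr (m u : ℕ) (qB qT : ℝ) : ℝ :=
  1 - (1/(m:ℝ)) * ∑ x : Fin m → Fin u → Bool,
    (let w : Fin m → ℕ := fun ℓ => hamming (x ℓ)
     let W : ℕ := ∑ ℓ, w ℓ
     let ws : ℕ := if qB ≤ qT then Finset.univ.sup w else sInf (Set.range w)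
     qT^ws * (1-qT)^(u-ws) * (qB^(W-ws) * (1-qB)^((m-1)*u-(W-ws))))

/-!
For one use each block is a single bit, so configurations are strings `y ∈ {0,1}^m` and `w*` is
`1` for every `y` except the all-zero string (when `qB ≤ qT`), resp. `0` for every `y` except the
all-one string (when `qT < qB`). Off that one string the summand is a fixed multiple, `qT / qB`
resp. `(1 - qT) / (1 - qB)`, of the binomial weight `qB ^ ‖y‖ * (1 - qB) ^ (m - ‖y‖)`, whose total
is `1`. That multiple is the `max` of the closed form, since `qT / qB ≥ (1 - qT) / (1 - qB)`
exactly when `qT ≥ qB`.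
-/

lemma hamming_fin_one (x : Fin 1 → Bool) : hamming x = (x 0).toNat := by
  rw [show x = fun _ => x 0 from funext fun k => congrArg x (Subsingleton.elim k 0)]
  cases x 0 <;> rfl

lemma sum_toNat_eq_hamming {m : ℕ} (y : Fin m → Bool) : ∑ ℓ, (y ℓ).toNat = hamming y := by
  rw [hamming, card_filter]
  exact sum_congr rfl fun ℓ _ => by cases y ℓ <;> rfl

lemma hamming_le {m : ℕ} (y : Fin m → Bool) : hamming y ≤ m :=
  (card_filter_le _ _).trans_eq (card_fin m)

lemma hamming_pos {m : ℕ} {y : Fin m → Bool} (hy : y ≠ fun _ => false) : 0 < hamming y := by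
  obtain ⟨ℓ, hℓ⟩ := Function.ne_iff.mp hy
  exact card_pos.mpr ⟨ℓ, by simpa using hℓ⟩

lemma hamming_lt {m : ℕ} {y : Fin m → Bool} (hy : y ≠ fun _ => true) : hamming y < m := by
  obtain ⟨ℓ, hℓ⟩ := Function.ne_iff.mp hy
  exact (card_lt_card (filter_ssubset.mpr ⟨ℓ, mem_univ ℓ, by simpa using hℓ⟩)).trans_eq
    (card_fin m)

@[simp] lemma hamming_false {m : ℕ} : hamming (fun _ : Fin m => false) = 0 := by simp [hamming]

@[simp] lemma hamming_true {m : ℕ} : hamming (fun _ : Fin m => true) = m := by simp [hamming]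

lemma prod_ite_eq_pow_hamming_mul_pow {R : Type*} [CommMonoid R] {m : ℕ} (a b : R)
    (y : Fin m → Bool) :
    ∏ ℓ, (if y ℓ then a else b) = a ^ hamming y * b ^ (m - hamming y) := by
  have hcard := card_filter_add_card_filter_not (s := univ) (p := fun ℓ => y ℓ = true)
  rw [card_univ, Fintype.card_fin] at hcard
  rw [prod_ite, prod_const, prod_const, hamming]
  congr 2
  omega

lemma sum_pow_hamming_mul_pow {R : Type*} [CommSemiring R] (m : ℕ) (a b : R) :
    ∑ y : Fin m → Bool, a ^ hamming y * b ^ (m - hamming y) = (a + b) ^ m := by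
  simp_rw [← prod_ite_eq_pow_hamming_mul_pow]
  rw [← Fintype.prod_sum (fun _ (c : Bool) => if c then a else b)]
  simp

lemma Fintype.sum_eq_add_mul_sub_of_ne {ι R : Type*} [Fintype ι] [DecidableEq ι] [CommRing R]
    {f g : ι → R} (i₀ : ι) (c : R) (h : ∀ i ≠ i₀, f i = c * g i) :
    ∑ i, f i = f i₀ + c * (∑ i, g i - g i₀) := by
  rw [← sum_erase_eq_sub (mem_univ i₀), mul_sum, ← add_sum_erase _ _ (mem_univ i₀)]
  exact congrArg _ (Finset.sum_congr rfl fun i hi => h i (ne_of_mem_erase hi))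

lemma sup_toNat_of_ne_false {m : ℕ} {y : Fin m → Bool} (hy : y ≠ fun _ => false) :
    univ.sup (fun ℓ => (y ℓ).toNat) = 1 := by
  obtain ⟨ℓ, hℓ⟩ := Function.ne_iff.mp hy
  refine le_antisymm (Finset.sup_le fun i _ => Bool.toNat_le _) ?_
  simpa [hℓ] using le_sup (f := fun ℓ => (y ℓ).toNat) (mem_univ ℓ)

lemma sInf_range_toNat_of_ne_true {m : ℕ} {y : Fin m → Bool} (hy : y ≠ fun _ => true) :
    sInf (Set.range fun ℓ => (y ℓ).toNat) = 0 := by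
  obtain ⟨ℓ, hℓ⟩ := Function.ne_iff.mp hy
  exact Nat.sInf_eq_zero.mpr (Or.inl ⟨ℓ, by simpa using hℓ⟩)

/-- The summand of `hErr m 1` with `w* = s` and `‖x‖ = W`. -/
def oneUseTerm (m : ℕ) (qB qT : ℝ) (s W : ℕ) : ℝ :=
  qT ^ s * (1 - qT) ^ (1 - s) * (qB ^ (W - s) * (1 - qB) ^ (m - 1 - (W - s)))

open Classical in
lemma hErr_one_eq_sum_oneUseTerm (m : ℕ) (qB qT : ℝ) :
    hErr m 1 qB qT = 1 - 1 / (m : ℝ) * ∑ y : Fin m → Bool, oneUseTerm m qB qT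
      (if qB ≤ qT then univ.sup fun ℓ => (y ℓ).toNat else sInf (Set.range fun ℓ => (y ℓ).toNat))
      (hamming y) := by
  rw [hErr, ← Fintype.sum_equiv
    (Equiv.piCongrRight fun _ => Equiv.funUnique (Fin 1) Bool).symm _ _ fun _ => rfl]
  simp [hamming_fin_one, sum_toNat_eq_hamming, oneUseTerm]

section

variable {m : ℕ} {qB : ℝ} (qT : ℝ)

lemma sum_oneUseTerm_sup (hqB : qB ≠ 0) :
    ∑ y : Fin m → Bool, oneUseTerm m qB qT (univ.sup fun ℓ => (y ℓ).toNat) (hamming y) =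
      (1 - qT) * (1 - qB) ^ (m - 1) + qT / qB * (1 - (1 - qB) ^ m) := by
  rw [Fintype.sum_eq_add_mul_sub_of_ne (fun _ => false) (qT / qB)
    (g := fun y => qB ^ hamming y * (1 - qB) ^ (m - hamming y)), sum_pow_hamming_mul_pow]
  · have hsup : (univ.sup fun _ : Fin m => (0 : ℕ)) = 0 :=
      Nat.le_zero.mp (Finset.sup_le fun _ _ => le_rfl)
    simp [hsup, oneUseTerm]
  · intro y hy
    obtain ⟨k, hk⟩ : ∃ k, hamming y = k + 1 := ⟨hamming y - 1, by have := hamming_pos hy; omega⟩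
    have hkm : k + 1 ≤ m := hk ▸ hamming_le y
    simp only [oneUseTerm, sup_toNat_of_ne_false hy, hk, Nat.add_sub_cancel, Nat.sub_self,
      pow_one, pow_zero]
    rw [show m - 1 - k = m - (k + 1) by omega]
    field_simp
    ring

lemma sum_oneUseTerm_sInf (hm : 0 < m) (hqB : qB ≠ 1) :
    ∑ y : Fin m → Bool, oneUseTerm m qB qT (sInf (Set.range fun ℓ => (y ℓ).toNat)) (hamming y) =
      qT * qB ^ (m - 1) + (1 - qT) / (1 - qB) * (1 - qB ^ m) := by
  have hqB' : 1 - qB ≠ 0 := sub_ne_zero.mpr hqB.symm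
  have : Nonempty (Fin m) := ⟨⟨0, hm⟩⟩
  rw [Fintype.sum_eq_add_mul_sub_of_ne (fun _ => true) ((1 - qT) / (1 - qB))
    (g := fun y => qB ^ hamming y * (1 - qB) ^ (m - hamming y)), sum_pow_hamming_mul_pow]
  · simp [Set.range_const, oneUseTerm]
  · intro y hy
    have hlt := hamming_lt hy
    simp only [oneUseTerm, sInf_range_toNat_of_ne_true hy, Nat.sub_zero, pow_zero, pow_one]
    rw [show m - hamming y = m - 1 - hamming y + 1 by omega, pow_succ]
    field_simp

end

theorem hErr_one_shot_general (m : ℕ)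
    (qB qT : ℝ) (hB : qB ∈ Set.Ioo (0:ℝ) 1) :
    hErr m 1 qB qT = 1 - (1/(m:ℝ)) *
      (qT * qB^(m-1) + (1-qT) * (1-qB)^(m-1)
        + (1 - (1-qB)^m - qB^m) * max (qT/qB) ((1-qT)/(1-qB))) := by
  obtain ⟨hB0, hB1⟩ := hB
  have hB1' : 0 < 1 - qB := sub_pos.mpr hB1
  rcases m with _ | n
  · simp [hErr] -- both sides are `1`, as `1 / (0 : ℝ) = 0`
  rw [hErr_one_eq_sum_oneUseTerm]
  rcases le_or_gt qB qT with h | h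
  · simp only [if_pos h]
    rw [sum_oneUseTerm_sup qT hB0.ne', Nat.add_sub_cancel,
      max_eq_left ((div_le_div_iff₀ hB1' hB0).2 (by nlinarith))]
    field_simp
    ring
  · simp only [if_neg h.not_ge]
    rw [sum_oneUseTerm_sInf qT (by positivity) hB1.ne, Nat.add_sub_cancel,
      max_eq_right ((div_le_div_iff₀ hB0 hB1').2 (by nlinarith))]
    field_simp
    ring

/-- Closed form of the channel-position-finding error function for one use. -/
theorem hErr_one_shot (m : ℕ) (hm : 2 ≤ m)
    (qB qT : ℝ) (hB : qB ∈ Set.Ioo (0:ℝ) 1) (hT : qT ∈ Set.Icc (0:ℝ) 1) :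
    hErr m 1 qB qT = 1 - (1/(m:ℝ)) *
      (qT * qB^(m-1) + (1-qT) * (1-qB)^(m-1)
        + (1 - (1-qB)^m - qB^m) * max (qT/qB) ((1-qT)/(1-qB))) :=
  hErr_one_shot_general m qB qT hB
end
end
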